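/- arXiv:2401.15786 — 4 statements merged into one kernel-verified Lean document; each statement's English description precedes it below -/
import Mathlib

section
/- Let (G,*) be a groupoid satisfying the identities (x*y)*z = (x*z)*y, x*(y*z) = x*(z*y), x*(y*z) = y*(x*z), and w*(x*(y*z)) = w*((x*y)*z). Then for every n ≥ 3, every full linear term over x_1,…,x_n induces the same n-ary operation on G as either the rightmost bracketing ⟨x_1, x_2, …, x_n⟩ or a leftmost bracketing [x_a, x_{b_1}, …, x_{b_{n-1}}] with b_1 < b_2 < ⋯ < b_{n-1}. Consequently the ac-spectrum satisfies s^ac_n(*) ≤ n + 1 and the associative spectrum satisfies s_n(*) ≤ 2 for n ≥ 3. -/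
/-- Terms (fully parenthesized products) over variables `x_1,…,x_n`. -/
inductive Term (n : ℕ) : Type
  | var : Fin n → Term n
  | mul : Term n → Term n → Term n

namespace Term

variable {n : ℕ} {G : Type*}

/-- Evaluation of a term in a groupoid `(G, op)` under an assignment `h`. -/
def eval (op : G → G → G) (h : Fin n → G) : Term n → G
  | var i => h i
  | mul s t => op (eval op h s) (eval op h t)

/-- The list of variable indices at the leaves, from left to right. -/
def leaves : Term n → List (Fin n)
  | var i => [i]
  | mul s t => leaves s ++ leaves t

/-- The leftmost variable of a term. -/
def leftVar : Term n → Fin n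
  | var i => i
  | mul s _ => leftVar s

/-- The factors `t_1, …, t_m` of the leftmost decomposition `t = [t_0, t_1, …, t_m]`. -/
def lmFactors : Term n → List (Term n)
  | var _ => []
  | mul s t => lmFactors s ++ [t]

/-- The left depth of the leftmost leaf of a term. -/
def leftDepth : Term n → ℕ
  | var _ => 0
  | mul s _ => leftDepth s + 1

/-- A bracketing of the word `x_1 x_2 ⋯ x_n`. -/
def IsBracketing (t : Term n) : Prop := t.leaves = List.finRange n

/-- A full linear term over `x_1, …, x_n`: each variable occurs exactly once. -/
def IsLinear (t : Term n) : Prop := t.leaves.Perm (List.finRange n)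

end Term

/-- Leftmost bracketing `[t_0, t_1, …, t_m]`. -/
def lmBr {n : ℕ} (t0 : Term n) (l : List (Term n)) : Term n := l.foldl Term.mul t0

/-- Leftmost bracketing of variables `[x_i, x_{j_1}, …, x_{j_k}]`. -/
def lBr {n : ℕ} (i : Fin n) (l : List (Fin n)) : Term n :=
  l.foldl (fun s j => Term.mul s (Term.var j)) (Term.var i)

/-- Rightmost bracketing of variables `⟨x_i, x_{j_1}, …, x_{j_k}⟩`. -/
def rmBr {n : ℕ} (i : Fin n) : List (Fin n) → Term n
  | [] => Term.var i
  | j :: l => Term.mul (Term.var i) (rmBr j l)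

/-- `n`-th term of the associative spectrum: the number of distinct `n`-ary operations
induced by bracketings of `x_1 ⋯ x_n`. -/
noncomputable def assocSpec {G : Type*} (op : G → G → G) (n : ℕ) : ℕ :=
  Set.ncard {f : (Fin n → G) → G | ∃ t : Term n, t.IsBracketing ∧ f = fun h => t.eval op h}

/-- `n`-th term of the ac-spectrum: the number of distinct `n`-ary operations
induced by full linear terms over `x_1, …, x_n`. -/
noncomputable def acSpec {G : Type*} (op : G → G → G) (n : ℕ) : ℕ :=
  Set.ncard {f : (Fin n → G) → G | ∃ t : Term n, t.IsLinear ∧ f = fun h => t.eval op h}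
/-- Bell numbers. -/
def bell : ℕ → ℕ
  | 0 => 1
  | n + 1 => ∑ k : Fin (n + 1), Nat.choose n k * bell k
  decreasing_by exact k.isLt

/-- Ordered Bell (Fubini) numbers. -/
def fubini : ℕ → ℕ
  | 0 => 1
  | n + 1 => ∑ k : Fin (n + 1), Nat.choose (n + 1) k * fubini k
  decreasing_by exact k.isLt

/-- Number of partitions of an `n`-set into blocks of size at most 2. -/
def bell2 : ℕ → ℕ
  | 0 => 1
  | 1 => 1
  | n + 2 => bell2 (n + 1) + (n + 1) * bell2 n

/-- The set of egg-pairs of (maximal nests of) a term. -/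
def Term.eggs {n : ℕ} : Term n → Finset (Finset (Fin n))
  | .var _ => ∅
  | .mul (.var i) (.var j) => {({i, j} : Finset (Fin n))}
  | .mul s t => Term.eggs s ∪ Term.eggs t


namespace SpecAux

variable {G : Type*}

/-- Right-nested product `a·(b₁·(b₂·⋯))`. -/
def rr (op : G → G → G) : G → List G → G
  | a, [] => a
  | a, b :: l => op a (rr op b l)

/-- Equal under every left context. -/
def R (op : G → G → G) (P Q : G) : Prop := ∀ w, op w P = op w Q

variable {op : G → G → G}

theorem R.rfl {a : G} : R op a a := fun _ => _root_.rfl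
theorem R.of_eq {a b : G} (h : a = b) : R op a b := by subst h; exact R.rfl
theorem R.symm' {a b : G} (h : R op a b) : R op b a := fun w => (h w).symm
theorem R.trans' {a b c : G} (h1 : R op a b) (h2 : R op b c) : R op a c :=
  fun w => (h1 w).trans (h2 w)

theorem R.mul (i2 : ∀ x y z : G, op x (op y z) = op x (op z y))
    (i3 : ∀ x y z : G, op x (op y z) = op y (op x z))
    {a b c d : G} (h1 : R op a b) (h2 : R op c d) :
    R op (op a c) (op b d) := by
  intro w
  rw [i3 w a c, h2, ← i3 w a d, i2 w a d, i3 w d a, h1, ← i3 w d b, i2 w d b]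

theorem R.comm (i2 : ∀ x y z : G, op x (op y z) = op x (op z y)) {a b : G} : R op (op a b) (op b a) := fun w => i2 w a b

theorem R.assoc (i4 : ∀ w x y z : G, op w (op x (op y z)) = op w (op (op x y) z)) {a b c : G} : R op (op (op a b) c) (op a (op b c)) :=
  fun w => (i4 w a b c).symm

theorem rr_mul (i2 : ∀ x y z : G, op x (op y z) = op x (op z y))
    (i3 : ∀ x y z : G, op x (op y z) = op y (op x z)) (i4 : ∀ w x y z : G, op w (op x (op y z)) = op w (op (op x y) z)) : ∀ (l : List G) (a b : G) (m : List G),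
    R op (op (rr op a l) (rr op b m)) (rr op a (l ++ b :: m))
  | [], _, _, _ => R.rfl
  | x :: l, a, b, m => by
      show R op (op (op a (rr op x l)) (rr op b m)) (op a (rr op x (l ++ b :: m)))
      exact (R.assoc i4).trans' (R.mul i2 i3 R.rfl (rr_mul i2 i3 i4 l x b m))

theorem rr_perm (i2 : ∀ x y z : G, op x (op y z) = op x (op z y))
    (i3 : ∀ x y z : G, op x (op y z) = op y (op x z)) {l m : List G} (p : l.Perm m) :
    ∀ a, R op (rr op a l) (rr op a m) := by
  induction p with
  | nil => exact fun a => R.rfl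
  | cons x _ ih => exact fun a => R.mul i2 i3 R.rfl (ih x)
  | swap x y l =>
      intro a
      cases l with
      | nil => exact R.mul i2 i3 R.rfl (R.comm i2)
      | cons z l' =>
          refine R.of_eq ?_
          show op a (op y (op x (rr op z l'))) = op a (op x (op y (rr op z l')))
          rw [i3 y x (rr op z l')]
  | trans _ _ ih1 ih2 => exact fun a => (ih1 a).trans' (ih2 a)

theorem rr_headswap (i2 : ∀ x y z : G, op x (op y z) = op x (op z y))
    (i3 : ∀ x y z : G, op x (op y z) = op y (op x z)) (a b : G) (u : List G) :
    R op (rr op a (b :: u)) (rr op b (a :: u)) := by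
  cases u with
  | nil => exact R.comm i2
  | cons z u' =>
      refine R.of_eq ?_
      show op a (op b (rr op z u')) = op b (op a (rr op z u'))
      rw [i3 a b (rr op z u')]

theorem rr_perm' (i2 : ∀ x y z : G, op x (op y z) = op x (op z y))
    (i3 : ∀ x y z : G, op x (op y z) = op y (op x z)) {a b : G} {l m : List G} (p : (a :: l).Perm (b :: m)) :
    R op (rr op a l) (rr op b m) := by
  have hb : b ∈ a :: l := p.symm.subset List.mem_cons_self
  rcases List.mem_cons.mp hb with h | h
  · subst h; exact rr_perm i2 i3 p.cons_inv _
  · obtain ⟨s, t, rfl⟩ := List.append_of_mem h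
    have p1 : (s ++ b :: t).Perm (b :: (s ++ t)) := List.perm_middle
    have step1 := rr_perm i2 i3 p1 a
    have step2 := rr_headswap i2 i3 a b (s ++ t)
    have p2 : m.Perm (a :: (s ++ t)) := by
      have h3 : (b :: m).Perm (b :: a :: (s ++ t)) :=
        p.symm.trans ((p1.cons a).trans (List.Perm.swap b a (s ++ t)))
      exact h3.cons_inv
    exact (step1.trans' step2).trans' (rr_perm i2 i3 p2.symm b)

theorem rr_eq_of_perm (i2 : ∀ x y z : G, op x (op y z) = op x (op z y))
    (i3 : ∀ x y z : G, op x (op y z) = op y (op x z)) {a b : G} {l m : List G} (hl : 2 ≤ l.length)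
    (p : (a :: l).Perm (b :: m)) : rr op a l = rr op b m := by
  have hb : b ∈ a :: l := p.symm.subset List.mem_cons_self
  obtain ⟨x, ls, rfl⟩ : ∃ x ls, l = x :: ls := by
    cases l with
    | nil => simp at hl
    | cons x ls => exact ⟨x, ls, _root_.rfl⟩
  obtain ⟨y, ms, rfl⟩ : ∃ y ms, m = y :: ms := by
    have := p.length_eq
    cases m with
    | nil => simp at this
    | cons y ms => exact ⟨y, ms, _root_.rfl⟩
  rcases List.mem_cons.mp hb with h | h
  · subst h
    exact rr_perm' i2 i3 p.cons_inv _
  · obtain ⟨s, t, hst⟩ := List.append_of_mem h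
    obtain ⟨z, u', hzu⟩ : ∃ z u', s ++ t = z :: u' := by
      have hlen : (s ++ t).length = ls.length := by
        have : (x :: ls).length = (s ++ b :: t).length := by rw [hst]
        simp at this ⊢; omega
      cases hsu : s ++ t with
      | nil => rw [hsu] at hlen; simp at hlen; simp at hl; omega
      | cons z u' => exact ⟨z, u', _root_.rfl⟩
    have pl : (x :: ls).Perm (b :: z :: u') := by
      rw [hst, ← hzu]; exact List.perm_middle
    have e1 : op a (rr op x ls) = op a (op b (rr op z u')) :=
      rr_perm' i2 i3 pl a
    have e2 : op a (op b (rr op z u')) = op b (op a (rr op z u')) :=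
      i3 a b (rr op z u')
    have pm : (a :: z :: u').Perm (y :: ms) := by
      have h3 : (b :: y :: ms).Perm (b :: a :: z :: u') := by
        refine p.symm.trans ?_
        refine ((pl.cons a).trans ?_)
        exact (List.Perm.swap b a (z :: u'))
      exact h3.cons_inv.symm
    have e3 : op b (rr op a (z :: u')) = op b (rr op y ms) :=
      rr_perm' i2 i3 pm b
    show op a (rr op x ls) = op b (rr op y ms)
    rw [e1, e2]; exact e3

theorem leaves_ne_nil {n : ℕ} : ∀ t : Term n, t.leaves ≠ []
  | Term.var i => by simp [Term.leaves]
  | Term.mul s t => by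
      simp only [Term.leaves]
      exact fun h => leaves_ne_nil s (List.append_eq_nil_iff.mp h).1

theorem leaves_cons {n : ℕ} (t : Term n) : ∃ a l, t.leaves = a :: l := by
  cases ht : t.leaves with
  | nil => exact absurd ht (leaves_ne_nil t)
  | cons a l => exact ⟨a, l, _root_.rfl⟩

theorem eval_R (i2 : ∀ x y z : G, op x (op y z) = op x (op z y))
    (i3 : ∀ x y z : G, op x (op y z) = op y (op x z)) (i4 : ∀ w x y z : G, op w (op x (op y z)) = op w (op (op x y) z)) {n : ℕ} (h : Fin n → G) :
    ∀ (t : Term n) (a : Fin n) (l : List (Fin n)),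
      t.leaves = a :: l → R op (t.eval op h) (rr op (h a) (l.map h))
  | Term.var i, a, l, hl => by
      simp only [Term.leaves] at hl
      obtain ⟨rfl, rfl⟩ : i = a ∧ l = [] := by
        injection hl with h1 h2; exact ⟨h1, h2.symm ▸ _root_.rfl⟩
      exact R.rfl
  | Term.mul s u, a, l, hl => by
      obtain ⟨as, ls, hs⟩ := leaves_cons s
      obtain ⟨au, lu, hu⟩ := leaves_cons u
      simp only [Term.leaves, hs, hu, List.cons_append] at hl
      obtain ⟨rfl, rfl⟩ : as = a ∧ l = ls ++ au :: lu := by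
        injection hl with h1 h2; exact ⟨h1, h2.symm⟩
      have IHs := eval_R i2 i3 i4 h s as ls hs
      have IHu := eval_R i2 i3 i4 h u au lu hu
      show R op (op (s.eval op h) (u.eval op h)) _
      refine ((R.mul i2 i3 IHs IHu).trans' (rr_mul i2 i3 i4 _ _ _ _)).trans' ?_
      refine R.of_eq ?_
      simp [List.map_append]

theorem eval_rmBr {n : ℕ} (op : G → G → G) (h : Fin n → G) :
    ∀ (i : Fin n) (l : List (Fin n)), (rmBr i l).eval op h = rr op (h i) (l.map h)
  | _, [] => rfl
  | i, j :: l => by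
      show op (h i) ((rmBr j l).eval op h) = op (h i) (rr op (h j) (l.map h))
      rw [eval_rmBr op h j l]

theorem lm_decomp {n : ℕ} : ∀ t : Term n, lmBr (Term.var t.leftVar) t.lmFactors = t
  | Term.var i => rfl
  | Term.mul s u => by
      show lmBr (Term.var s.leftVar) (s.lmFactors ++ [u]) = Term.mul s u
      unfold lmBr
      rw [List.foldl_append]
      show Term.mul (lmBr (Term.var s.leftVar) s.lmFactors) u = Term.mul s u
      rw [lm_decomp s]

theorem eval_lmBr {n : ℕ} (op : G → G → G) (h : Fin n → G) :
    ∀ (l : List (Term n)) (t0 : Term n),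
      (lmBr t0 l).eval op h = l.foldl (fun g f => op g (f.eval op h)) (t0.eval op h)
  | [], _ => rfl
  | f :: l, t0 => by
      show (lmBr (Term.mul t0 f) l).eval op h = _
      rw [eval_lmBr op h l (Term.mul t0 f)]
      rfl

theorem leaves_lmBr {n : ℕ} :
    ∀ (l : List (Term n)) (t0 : Term n),
      (lmBr t0 l).leaves = t0.leaves ++ l.flatMap Term.leaves
  | [], t0 => by simp [lmBr, Term.leaves]
  | f :: l, t0 => by
      show (lmBr (Term.mul t0 f) l).leaves = _
      rw [leaves_lmBr l (Term.mul t0 f)]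
      simp [Term.leaves, List.flatMap_cons, List.append_assoc]

theorem lBr_eq_lmBr {n : ℕ} (i : Fin n) (l : List (Fin n)) :
    lBr i l = lmBr (Term.var i) (l.map Term.var) := by
  unfold lBr lmBr
  rw [List.foldl_map]

theorem flatMap_leaves_var {n : ℕ} (l : List (Fin n)) :
    (l.map Term.var).flatMap Term.leaves = l := by
  induction l with
  | nil => rfl
  | cons j l ih => simp [List.flatMap_cons, Term.leaves, ih]

theorem leaves_lBr {n : ℕ} (i : Fin n) (l : List (Fin n)) :
    (lBr i l).leaves = i :: l := by
  rw [lBr_eq_lmBr, leaves_lmBr, flatMap_leaves_var]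
  rfl

theorem eval_lBr {n : ℕ} (op : G → G → G) (h : Fin n → G) (i : Fin n) (l : List (Fin n)) :
    (lBr i l).eval op h = l.foldl (fun g j => op g (h j)) (h i) := by
  rw [lBr_eq_lmBr, eval_lmBr]
  rw [List.foldl_map]
  rfl


theorem leftVar_eq {n : ℕ} : ∀ (t : Term n) (a : Fin n) (l : List (Fin n)),
    t.leaves = a :: l → t.leftVar = a
  | Term.var i, a, l, hl => by
      simp [Term.leaves] at hl; exact hl.1
  | Term.mul s u, a, l, hl => by
      obtain ⟨as, ls, hs⟩ := leaves_cons s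
      have has : as = a := by
        simp [Term.leaves, hs] at hl; exact hl.1
      show s.leftVar = a
      exact has ▸ leftVar_eq s as ls hs

variable {op : G → G → G}

theorem eval_eq_rm (i2 : ∀ x y z : G, op x (op y z) = op x (op z y))
    (i3 : ∀ x y z : G, op x (op y z) = op y (op x z))
    (i4 : ∀ w x y z : G, op w (op x (op y z)) = op w (op (op x y) z))
    {n : ℕ} (h : Fin n → G) (s u : Term n)
    (hlin : (Term.mul s u).IsLinear) (hu : 2 ≤ u.leaves.length)
    (c0 : Fin n) (tl : List (Fin n)) (hfr : List.finRange n = c0 :: tl) :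
    (Term.mul s u).eval op h = (rmBr c0 tl).eval op h := by
  obtain ⟨as, ls, hs⟩ := leaves_cons s
  obtain ⟨b, c, lu, hu2⟩ : ∃ b c lu, u.leaves = b :: c :: lu := by
    obtain ⟨b, l1, hb⟩ := leaves_cons u
    cases l1 with
    | nil => rw [hb] at hu; simp at hu
    | cons c lu => exact ⟨b, c, lu, hb⟩
  have Es := eval_R i2 i3 i4 h s as ls hs
  have Eu := eval_R i2 i3 i4 h u b (c :: lu) hu2
  have hperm : (b :: as :: (ls ++ c :: lu)).Perm (c0 :: tl) := by
    have e : (Term.mul s u).leaves = as :: (ls ++ b :: c :: lu) := by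
      simp [Term.leaves, hs, hu2]
    have h0 : (as :: (ls ++ b :: c :: lu)).Perm (c0 :: tl) := by
      rw [← e, ← hfr]; exact hlin
    refine List.Perm.trans ?_ h0
    refine (List.Perm.swap as b _).trans ?_
    exact (List.perm_middle.symm).cons as
  calc (Term.mul s u).eval op h
      = op (s.eval op h) (u.eval op h) := rfl
    _ = op (s.eval op h) (rr op (h b) ((c :: lu).map h)) := Eu (s.eval op h)
    _ = op (h b) (op (s.eval op h) (rr op (h c) (lu.map h))) := i3 _ _ _
    _ = op (h b) (rr op (h as) (ls.map h ++ h c :: lu.map h)) :=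
        ((R.mul i2 i3 Es R.rfl).trans' (rr_mul i2 i3 i4 _ _ _ _)) (h b)
    _ = rr op (h b) (h as :: (ls.map h ++ h c :: lu.map h)) := rfl
    _ = rr op (h c0) (tl.map h) := by
        refine rr_eq_of_perm i2 i3 ?_ ?_
        · simp; omega
        · have := hperm.map h
          simpa using this
    _ = (rmBr c0 tl).eval op h := (eval_rmBr op h c0 tl).symm


theorem main_dichotomy
    (i1 : ∀ x y z : G, op (op x y) z = op (op x z) y)
    (i2 : ∀ x y z : G, op x (op y z) = op x (op z y))
    (i3 : ∀ x y z : G, op x (op y z) = op y (op x z))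
    (i4 : ∀ w x y z : G, op w (op x (op y z)) = op w (op (op x y) z))
    {n : ℕ} (c0 : Fin n) (tl : List (Fin n)) (hfr : List.finRange n = c0 :: tl)
    (t : Term n) (ht : t.IsLinear) :
    (∀ h : Fin n → G, t.eval op h = (rmBr c0 tl).eval op h) ∨
    (∀ h : Fin n → G, t.eval op h =
      (lBr t.leftVar ((List.finRange n).filter fun j => j ≠ t.leftVar)).eval op h) := by
  by_cases hv : ∀ f ∈ t.lmFactors, ∃ j, f = Term.var j
  · right
    have hmapvar : (t.lmFactors.map Term.leftVar).map Term.var = t.lmFactors := by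
      rw [List.map_map]
      conv_rhs => rw [← List.map_id t.lmFactors]
      refine List.map_congr_left ?_
      intro f hf; obtain ⟨j, rfl⟩ := hv f hf; rfl
    have hdecomp : lBr t.leftVar (t.lmFactors.map Term.leftVar) = t := by
      rw [lBr_eq_lmBr, hmapvar]; exact lm_decomp t
    have hleaves : t.leaves = t.leftVar :: t.lmFactors.map Term.leftVar := by
      conv_lhs => rw [← hdecomp]
      exact leaves_lBr _ _
    have h1 : (t.leftVar :: t.lmFactors.map Term.leftVar).Perm (List.finRange n) :=
      hleaves ▸ ht
    have h2 : (List.finRange n).Perm (t.leftVar :: (List.finRange n).erase t.leftVar) :=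
      List.perm_cons_erase (List.mem_finRange t.leftVar)
    have h3 : (t.lmFactors.map Term.leftVar).Perm ((List.finRange n).erase t.leftVar) :=
      (h1.trans h2).cons_inv
    have h4 : (List.finRange n).erase t.leftVar
        = (List.finRange n).filter (fun j => j ≠ t.leftVar) := by
      rw [(List.nodup_finRange n).erase_eq_filter]
      refine List.filter_congr ?_
      intro j _
      rw [Bool.eq_iff_iff]
      simp [bne_iff_ne]
    have h5 : (t.lmFactors.map Term.leftVar).Perm
        ((List.finRange n).filter (fun j => j ≠ t.leftVar)) := h4 ▸ h3
    intro h
    conv_lhs => rw [← hdecomp]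
    rw [eval_lBr, eval_lBr]
    letI : RightCommutative (fun g j => op g (h j)) :=
      ⟨fun b a1 a2 => i1 b (h a1) (h a2)⟩
    exact h5.foldl_eq _
  · left
    push_neg at hv
    obtain ⟨f, hf, hnv⟩ := hv
    obtain ⟨u, v, rfl⟩ : ∃ u v, f = Term.mul u v := by
      cases f with
      | var j => exact absurd rfl (hnv j)
      | mul u v => exact ⟨u, v, rfl⟩
    obtain ⟨s1, s2, hsplit⟩ := List.append_of_mem hf
    have hpf : t.lmFactors.Perm ((s1 ++ s2) ++ [Term.mul u v]) := by
      rw [hsplit]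
      exact List.perm_middle.trans (List.perm_append_singleton _ _).symm
    have hlmBr : lmBr (Term.var t.leftVar) ((s1 ++ s2) ++ [Term.mul u v])
        = Term.mul (lmBr (Term.var t.leftVar) (s1 ++ s2)) (Term.mul u v) := by
      unfold lmBr; rw [List.foldl_append]; rfl
    have heval : ∀ h : Fin n → G,
        t.eval op h
          = (Term.mul (lmBr (Term.var t.leftVar) (s1 ++ s2)) (Term.mul u v)).eval op h := by
      intro h
      conv_lhs => rw [← lm_decomp t]
      rw [← hlmBr, eval_lmBr, eval_lmBr]
      letI : RightCommutative (fun g (f : Term n) => op g (f.eval op h)) :=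
        ⟨fun b a1 a2 => i1 b _ _⟩
      exact hpf.foldl_eq _
    have hleq : (Term.mul (lmBr (Term.var t.leftVar) (s1 ++ s2)) (Term.mul u v)).leaves.Perm
        t.leaves := by
      conv_rhs => rw [← lm_decomp t]
      rw [← hlmBr, leaves_lmBr, leaves_lmBr]
      exact ((hpf.flatMap_right Term.leaves).symm).append_left _
    have hlin' : (Term.mul (lmBr (Term.var t.leftVar) (s1 ++ s2)) (Term.mul u v)).IsLinear :=
      hleq.trans ht
    have hu2 : 2 ≤ (Term.mul u v).leaves.length := by
      show 2 ≤ (u.leaves ++ v.leaves).length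
      rw [List.length_append]
      have h1 := List.length_pos_iff.mpr (leaves_ne_nil u)
      have h2 := List.length_pos_iff.mpr (leaves_ne_nil v)
      omega
    intro h
    rw [heval h]
    exact eval_eq_rm i2 i3 i4 h _ _ hlin' hu2 c0 tl hfr

end SpecAux

/-- For groupoids satisfying `(xy)z ≈ (xz)y`, `x(yz) ≈ x(zy) ≈ y(xz)` and
`w(x(yz)) ≈ w((xy)z)`, every full linear term is equivalent to the rightmost bracketing
`⟨x_1,…,x_n⟩` or to a leftmost bracketing `[x_a, x_{b_1},…,x_{b_{n-1}}]` with increasing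
`b`'s; hence `s^ac_n ≤ n+1` and `s_n ≤ 2` for `n ≥ 3`. -/
theorem spec_bounds_nPlusOne {G : Type*} (op : G → G → G)
    (i1 : ∀ x y z : G, op (op x y) z = op (op x z) y)
    (i2 : ∀ x y z : G, op x (op y z) = op x (op z y))
    (i3 : ∀ x y z : G, op x (op y z) = op y (op x z))
    (i4 : ∀ w x y z : G, op w (op x (op y z)) = op w (op (op x y) z))
    (n : ℕ) (hn : 3 ≤ n) :
    (∀ t : Term n, t.IsLinear →
      (∀ h : Fin n → G,
        t.eval op h = (rmBr (⟨0, by omega⟩ : Fin n) (List.finRange n).tail).eval op h) ∨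
      (∃ a : Fin n, ∀ h : Fin n → G,
        t.eval op h = (lBr a ((List.finRange n).filter fun j => j ≠ a)).eval op h)) ∧
    acSpec op n ≤ n + 1 ∧ assocSpec op n ≤ 2 := by
  obtain ⟨m, rfl⟩ : ∃ m, n = m + 3 := ⟨n - 3, by omega⟩
  have hfr : List.finRange (m + 3) =
      (⟨0, by omega⟩ : Fin (m + 3)) :: (List.finRange (m + 3)).tail := by
    rw [List.finRange_succ]
    rfl
  have key := fun (t : Term (m + 3)) (ht : t.IsLinear) =>
    SpecAux.main_dichotomy i1 i2 i3 i4 _ _ hfr t ht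
  refine ⟨fun t ht => ?_, ?_, ?_⟩
  · rcases key t ht with hL | hR
    · exact Or.inl hL
    · exact Or.inr ⟨t.leftVar, hR⟩
  · -- acSpec
    have hsub : {f : (Fin (m + 3) → G) → G |
        ∃ t : Term (m + 3), t.IsLinear ∧ f = fun h => t.eval op h} ⊆
        insert
          (fun h => (rmBr (⟨0, by omega⟩ : Fin (m + 3)) (List.finRange (m + 3)).tail).eval op h)
          (Set.range fun (a : Fin (m + 3)) =>
            fun h => (lBr a ((List.finRange (m + 3)).filter fun j => j ≠ a)).eval op h) := by
      rintro f ⟨t, ht, rfl⟩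
      rcases key t ht with hL | hR
      · exact Set.mem_insert_iff.mpr (Or.inl (funext hL))
      · exact Set.mem_insert_iff.mpr (Or.inr ⟨t.leftVar, (funext hR).symm⟩)
    have hfin : (Set.range fun (a : Fin (m + 3)) =>
        fun h => (lBr a ((List.finRange (m + 3)).filter fun j => j ≠ a)).eval op h).Finite :=
      Set.finite_range _
    calc acSpec op (m + 3) ≤ _ := Set.ncard_le_ncard hsub (hfin.insert _)
      _ ≤ _ + 1 := Set.ncard_insert_le _ _
      _ ≤ (m + 3) + 1 := by
          have h1 : (Set.range fun (a : Fin (m + 3)) =>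
              fun h => (lBr a ((List.finRange (m + 3)).filter fun j => j ≠ a)).eval op h).ncard
              ≤ (Set.univ : Set (Fin (m + 3))).ncard := by
            rw [← Set.image_univ]
            exact Set.ncard_image_le Set.finite_univ
          have h2 : (Set.univ : Set (Fin (m + 3))).ncard = m + 3 := by
            rw [Set.ncard_univ]; simp
          omega
  · -- assocSpec
    have hsub : {f : (Fin (m + 3) → G) → G |
        ∃ t : Term (m + 3), t.IsBracketing ∧ f = fun h => t.eval op h} ⊆
        {(fun h => (rmBr (⟨0, by omega⟩ : Fin (m + 3)) (List.finRange (m + 3)).tail).eval op h),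
         (fun h => (lBr (⟨0, by omega⟩ : Fin (m + 3))
            ((List.finRange (m + 3)).filter
              fun j => j ≠ (⟨0, by omega⟩ : Fin (m + 3)))).eval op h)} := by
      rintro f ⟨t, hb, rfl⟩
      have hb' : t.leaves = List.finRange (m + 3) := hb
      have ht : t.IsLinear := by
        show t.leaves.Perm _
        rw [hb']
      have hlv : t.leftVar = ⟨0, by omega⟩ :=
        SpecAux.leftVar_eq t _ _ (hb'.trans hfr)
      rcases key t ht with hL | hR
      · exact Or.inl (funext hL)
      · right
        rw [Set.mem_singleton_iff]
        funext h
        rw [hR h, hlv]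
    calc assocSpec op (m + 3) ≤ _ :=
          Set.ncard_le_ncard hsub ((Set.finite_singleton _).insert _)
      _ ≤ _ + 1 := Set.ncard_insert_le _ _
      _ ≤ 2 := by rw [Set.ncard_singleton]
end

section
/- Consider the 3-element groupoid G = {0,1,2} with * given by: 0*0=0, 0*1=0, 0*2=0; 1*0=0, 1*1=0, 1*2=0; 2*0=0, 2*1=2, 2*2=0 (groupoid SC7). Then for n ≥ 3, the number of distinct n-ary operations on G induced by full linear terms over x_1,…,x_n is exactly n + 1, and the number induced by bracketings of x_1⋯x_n is exactly 2. -/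
/-- Groupoid SC7 on `{0,1,2}`. -/
def sc7 : Fin 3 → Fin 3 → Fin 3 := fun a b => ![![0, 0, 0], ![0, 0, 0], ![0, 2, 0]] a b

section SC7Aux

lemma sc7_two_iff : ∀ a b : Fin 3, (sc7 a b = 2 ↔ a = 2 ∧ b = 1) := by decide

lemma sc7_ne_one : ∀ a b : Fin 3, sc7 a b ≠ 1 := by decide

lemma sc7_zero_left : ∀ b : Fin 3, sc7 0 b = 0 := by decide

lemma sc7_right_mul : ∀ a y z : Fin 3, sc7 a (sc7 y z) = 0 := by decide

lemma fin3_eq_zero : ∀ a : Fin 3, a ≠ 1 → a ≠ 2 → a = 0 := by decide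

/-- Comb data: if the term is a left comb of variables, return spine head and list. -/
def combData {n : ℕ} : Term n → Option (Fin n × List (Fin n))
  | .var i => some (i, [])
  | .mul s (.var j) => (combData s).map fun p => (p.1, p.2 ++ [j])
  | .mul _ (.mul _ _) => none

lemma eval_eq_two {n : ℕ} : ∀ (t : Term n) (h : Fin n → Fin 3),
    (t.eval sc7 h = 2 ↔ ∃ p, combData t = some p ∧ h p.1 = 2 ∧ ∀ j ∈ p.2, h j = 1)
  | .var i, h => by
      simp [Term.eval, combData]
  | .mul s (.var j), h => by
      rw [Term.eval, sc7_two_iff, eval_eq_two s h]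
      simp only [Term.eval, combData, Option.map_eq_some_iff]
      constructor
      · rintro ⟨⟨⟨i, l⟩, hc, h2, h1⟩, hj⟩
        refine ⟨(i, l ++ [j]), ⟨(i, l), hc, rfl⟩, h2, ?_⟩
        intro a ha
        rcases List.mem_append.1 ha with ha | ha
        · exact h1 a ha
        · simp at ha; subst ha; exact hj
      · rintro ⟨p, ⟨⟨i, l⟩, hc, rfl⟩, h2, h1⟩
        refine ⟨⟨(i, l), hc, h2, fun a ha => h1 a (List.mem_append.2 (Or.inl ha))⟩, ?_⟩
        exact h1 j (List.mem_append.2 (Or.inr (List.mem_singleton_self j)))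
  | .mul s (.mul u v), h => by
      simp [Term.eval, combData, sc7_right_mul]

lemma leaves_of_combData {n : ℕ} : ∀ (t : Term n) (p : Fin n × List (Fin n)),
    combData t = some p → t.leaves = p.1 :: p.2
  | .var i, p, hp => by
      simp [combData] at hp; subst hp; simp [Term.leaves]
  | .mul s (.var j), p, hp => by
      simp only [combData, Option.map_eq_some_iff] at hp
      obtain ⟨⟨i, l⟩, hq, rfl⟩ := hp
      simp [Term.leaves, leaves_of_combData s (i, l) hq]
  | .mul s (.mul u v), p, hp => by
      simp [combData] at hp

lemma leaves_foldl {n : ℕ} (l : List (Fin n)) : ∀ t : Term n,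
    (l.foldl (fun s j => Term.mul s (Term.var j)) t).leaves = t.leaves ++ l := by
  induction l with
  | nil => simp
  | cons a l ih =>
    intro t
    rw [List.foldl_cons, ih]
    simp [Term.leaves]

lemma combData_foldl {n : ℕ} (l : List (Fin n)) : ∀ (t : Term n) (i : Fin n) (m : List (Fin n)),
    combData t = some (i, m) →
    combData (l.foldl (fun s j => Term.mul s (Term.var j)) t) = some (i, m ++ l) := by
  induction l with
  | nil => intro t i m h; simpa using h
  | cons a l ih =>
    intro t i m h
    rw [List.foldl_cons]
    have := ih (Term.mul t (Term.var a)) i (m ++ [a]) (by simp [combData, h])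
    simpa using this

lemma eval_foldl_zero {n : ℕ} (l : List (Fin n)) : ∀ (t : Term n) (h : Fin n → Fin 3),
    t.eval sc7 h = 0 →
    (l.foldl (fun s j => Term.mul s (Term.var j)) t).eval sc7 h = 0 := by
  induction l with
  | nil => intro t h ht; simpa using ht
  | cons a l ih =>
    intro t h ht
    rw [List.foldl_cons]
    exact ih _ h (by simp [Term.eval, ht, sc7_zero_left])

/-- The nonzero operations induced by comb terms. -/
def Fop (n : ℕ) (i : Fin n) : (Fin n → Fin 3) → Fin 3 :=
  fun h => if h i = 2 ∧ ∀ j, j ≠ i → h j = 1 then 2 else 0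

/-- Test assignment. -/
def tassign (n : ℕ) (i : Fin n) : Fin n → Fin 3 := fun k => if k = i then 2 else 1

lemma Fop_tassign (n : ℕ) (i : Fin n) : Fop n i (tassign n i) = 2 := by
  rw [Fop, if_pos]
  exact ⟨by simp [tassign], fun j hj => by simp [tassign, hj]⟩

lemma Fop_tassign_ne (n : ℕ) (i j : Fin n) (hij : j ≠ i) : Fop n j (tassign n i) = 0 := by
  rw [Fop, if_neg]
  rintro ⟨h2, -⟩
  simp [tassign, hij] at h2

lemma eval_comb_fun {n : ℕ} (t : Term n) (i : Fin n) (l : List (Fin n)) (hl : l ≠ [])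
    (hc : combData t = some (i, l)) (hcov : ∀ j, j ∈ l ↔ j ≠ i) (h : Fin n → Fin 3) :
    t.eval sc7 h = Fop n i h := by
  have hmul : t.eval sc7 h ≠ 1 := by
    cases t with
    | var k =>
      simp [combData] at hc
      exact absurd hc.2 hl
    | mul s u => exact sc7_ne_one _ _
  rw [Fop]
  split_ifs with hcond
  · exact (eval_eq_two t h).2 ⟨(i, l), hc, hcond.1, fun j hj => hcond.2 j ((hcov j).1 hj)⟩
  · refine fin3_eq_zero _ hmul fun h2 => ?_
    rw [eval_eq_two] at h2
    obtain ⟨p, hp, hp2, hp1⟩ := h2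
    rw [hc] at hp
    injection hp with hp
    subst hp
    exact hcond ⟨hp2, fun j hj => hp1 j ((hcov j).2 hj)⟩

lemma hcov_of_perm {n : ℕ} (i : Fin n) (l : List (Fin n))
    (hperm : (i :: l).Perm (List.finRange n)) : ∀ j, j ∈ l ↔ j ≠ i := by
  have hnd : (i :: l).Nodup := hperm.nodup_iff.2 (List.nodup_finRange n)
  intro j
  constructor
  · intro hj hji
    subst hji
    exact (List.nodup_cons.1 hnd).1 hj
  · intro hji
    have : j ∈ i :: l := hperm.mem_iff.2 (List.mem_finRange j)
    rcases List.mem_cons.1 this with h | h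
    · exact absurd h hji
    · exact h

end SC7Aux

/-- For SC7, the ac-spectrum equals `n + 1` and the associative spectrum equals `2`
for `n ≥ 3`. -/
theorem sc7_spectra (n : ℕ) (hn : 3 ≤ n) :
    acSpec sc7 n = n + 1 ∧ assocSpec sc7 n = 2 := by
  classical
  have hlenfr : (List.finRange n).length = n := List.length_finRange
  obtain ⟨a, b, c, rest, hL⟩ : ∃ a b c rest, List.finRange n = a :: b :: c :: rest := by
    rcases hE : List.finRange n with _ | ⟨a, _ | ⟨b, _ | ⟨c, rest⟩⟩⟩ <;>
      first
        | exact ⟨a, b, c, rest, rfl⟩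
        | (rw [hE] at hlenfr; simp at hlenfr; omega)
  set Z : (Fin n → Fin 3) → Fin 3 := fun _ => 0 with hZdef
  -- the zero term (a bracketing)
  set zt : Term n :=
    rest.foldl (fun s j => Term.mul s (Term.var j))
      (Term.mul (Term.var a) (Term.mul (Term.var b) (Term.var c))) with hztdef
  have hztleaves : zt.leaves = List.finRange n := by
    rw [hztdef, leaves_foldl]
    simp [Term.leaves, hL]
  have hzteval : ∀ h, zt.eval sc7 h = 0 := by
    intro h
    rw [hztdef]
    exact eval_foldl_zero rest _ h (by simp [Term.eval, sc7_right_mul])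
  have hztZ : (fun h => zt.eval sc7 h) = Z := funext hzteval
  -- terms with eval = Z
  have hzero_of_combNone : ∀ t : Term n, t.leaves.length = n → combData t = none →
      (fun h => t.eval sc7 h) = Z := by
    intro t hlen hcn
    funext h
    have hnv : t.eval sc7 h ≠ 1 := by
      cases t with
      | var k => simp [Term.leaves] at hlen; omega
      | mul s u => exact sc7_ne_one _ _
    refine fin3_eq_zero _ hnv fun h2 => ?_
    rw [eval_eq_two] at h2
    obtain ⟨p, hp, -⟩ := h2
    rw [hcn] at hp
    exact nomatch hp
  -- terms with comb data, linear ⇒ Fop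
  have hcomb_fun : ∀ (t : Term n) (i : Fin n) (l : List (Fin n)),
      combData t = some (i, l) → (i :: l).Perm (List.finRange n) →
      (fun h => t.eval sc7 h) = Fop n i := by
    intro t i l hc hperm
    have hlen : (i :: l).length = n := by rw [hperm.length_eq, hlenfr]
    have hl : l ≠ [] := by
      intro h0
      rw [h0] at hlen
      simp at hlen
      omega
    exact funext (eval_comb_fun t i l hl hc (hcov_of_perm i l hperm))
  -- Fop is realized by a linear term
  have hFop_realized : ∀ i : Fin n, ∃ t : Term n, t.IsLinear ∧
      (fun h => t.eval sc7 h) = Fop n i := by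
    intro i
    have hmem : i ∈ List.finRange n := List.mem_finRange i
    have hperm : (i :: (List.finRange n).erase i).Perm (List.finRange n) :=
      (List.perm_cons_erase hmem).symm
    refine ⟨((List.finRange n).erase i).foldl (fun s j => Term.mul s (Term.var j))
      (Term.var i), ?_, ?_⟩
    · unfold Term.IsLinear
      rw [leaves_foldl]
      simpa [Term.leaves] using hperm
    · exact hcomb_fun _ i _ (combData_foldl _ _ i [] (by simp [combData])) hperm
  have hZ_ne_Fop : ∀ i : Fin n, Z ≠ Fop n i := by
    intro i hEq
    have := congrFun hEq (tassign n i)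
    rw [Fop_tassign] at this
    have h0 : (0 : Fin 3) = 2 := this
    exact absurd h0 (by decide)
  -- ac spectrum
  have hac : {f : (Fin n → Fin 3) → Fin 3 |
      ∃ t : Term n, t.IsLinear ∧ f = fun h => t.eval sc7 h} =
      insert Z (Set.range (Fop n)) := by
    ext f
    constructor
    · rintro ⟨t, hlin, rfl⟩
      have hlen : t.leaves.length = n := by rw [hlin.length_eq, hlenfr]
      rcases hc : combData t with _ | ⟨i, l⟩
      · exact Or.inl (hzero_of_combNone t hlen hc)
      · refine Or.inr ⟨i, (hcomb_fun t i l hc ?_).symm⟩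
        rw [← leaves_of_combData t (i, l) hc]
        exact hlin
    · rintro (rfl | ⟨i, rfl⟩)
      · exact ⟨zt, by rw [Term.IsLinear, hztleaves], hztZ.symm⟩
      · obtain ⟨t, hlin, hf⟩ := hFop_realized i
        exact ⟨t, hlin, hf.symm⟩
  -- assoc spectrum: any bracketing with comb data must start with a
  have has : {f : (Fin n → Fin 3) → Fin 3 |
      ∃ t : Term n, t.IsBracketing ∧ f = fun h => t.eval sc7 h} = {Z, Fop n a} := by
    ext f
    constructor
    · rintro ⟨t, hbr, rfl⟩
      have hleq : t.leaves = List.finRange n := hbr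
      have hlen : t.leaves.length = n := by rw [hleq, hlenfr]
      rcases hc : combData t with _ | ⟨i, l⟩
      · exact Or.inl (hzero_of_combNone t hlen hc)
      · have hil : (i :: l) = List.finRange n := by
          rw [← leaves_of_combData t (i, l) hc]; exact hleq
        have hperm : (i :: l).Perm (List.finRange n) := by rw [hil]
        have hia : i = a := by rw [hL] at hil; injection hil
        subst hia
        exact Or.inr (hcomb_fun t i l hc hperm)
    · rintro (rfl | rfl)
      · exact ⟨zt, hztleaves, hztZ.symm⟩
      · refine ⟨(b :: c :: rest).foldl (fun s j => Term.mul s (Term.var j)) (Term.var a),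
          ?_, ?_⟩
        · unfold Term.IsBracketing
          rw [leaves_foldl]
          simp [Term.leaves, hL]
        · refine (hcomb_fun _ a _ (combData_foldl _ _ a [] (by simp [combData])) ?_).symm
          rw [hL]
          exact List.Perm.refl _
  constructor
  · rw [acSpec, hac]
    have hFinj : Function.Injective (Fop n) := by
      intro i j hij
      by_contra hne
      have h2 := congrFun hij (tassign n i)
      rw [Fop_tassign, Fop_tassign_ne n i j (Ne.symm hne)] at h2
      exact absurd h2 (by decide)
    have hZnot : Z ∉ Set.range (Fop n) := by
      rintro ⟨i, hi⟩
      exact hZ_ne_Fop i hi.symm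
    rw [Set.ncard_insert_of_notMem hZnot, ← Nat.card_coe_set_eq,
      Nat.card_range_of_injective hFinj]
    simp
  · rw [assocSpec, has, Set.ncard_pair (hZ_ne_Fop a)]
end

section
/- Consider the 2-element groupoid G = {0,1} with a*b := (a + 1) mod 2 for all a,b ∈ {0,1}. Then for every n ≥ 3, the number of distinct n-ary operations on G induced by full linear terms over x_1,…,x_n is exactly 2n, and the number induced by bracketings of x_1⋯x_n is exactly 2. -/
/-- The 2-element groupoid with `a * b = (a + 1) mod 2`. -/
def addOneMod2 : Fin 2 → Fin 2 → Fin 2 := fun a _ => a + 1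

open Fin.NatCast Fin.CommRing

namespace AOM2

lemma eval_eq (h : Fin n → Fin 2) (t : Term n) :
    t.eval addOneMod2 h = h t.leftVar + (t.leftDepth : Fin 2) := by
  induction t with
  | var i => simp [Term.eval, Term.leftVar, Term.leftDepth]
  | mul s t ihs iht =>
      simp only [Term.eval, Term.leftVar, Term.leftDepth, addOneMod2, ihs]
      push_cast
      ring

variable {n : ℕ}

lemma leaves_leftVar (t : Term n) : ∃ l, t.leaves = t.leftVar :: l := by
  induction t with
  | var i => exact ⟨[], rfl⟩
  | mul s t ihs _ =>
      obtain ⟨l, hl⟩ := ihs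
      exact ⟨l ++ t.leaves, by simp [Term.leaves, Term.leftVar, hl]⟩

lemma leaves_rmBr (i : Fin n) (l : List (Fin n)) : (rmBr i l).leaves = i :: l := by
  induction l generalizing i with
  | nil => rfl
  | cons j l ih => simp [rmBr, Term.leaves, ih]

lemma leftVar_rmBr (i : Fin n) (l : List (Fin n)) : (rmBr i l).leftVar = i := by
  cases l <;> rfl

lemma exists_term (a b c : Fin n) (rest : List (Fin n)) (k : Fin 2) :
    ∃ t : Term n, t.leaves = a :: b :: c :: rest ∧ t.leftVar = a ∧
      ((t.leftDepth : Fin 2)) = k := by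
  fin_cases k
  · refine ⟨Term.mul (Term.mul (.var a) (.var b)) (rmBr c rest), ?_, rfl, ?_⟩
    · simp [Term.leaves, leaves_rmBr]
    · simp [Term.leftDepth]
  · refine ⟨rmBr a (b :: c :: rest), by simp [leaves_rmBr], leftVar_rmBr .., ?_⟩
    simp [rmBr, Term.leftDepth]

lemma F_inj (hn : 1 ≤ n) :
    Function.Injective (fun p : Fin n × Fin 2 => fun h : Fin n → Fin 2 => h p.1 + p.2) := by
  rintro ⟨i, c⟩ ⟨i', c'⟩ hEq
  simp only at hEq
  have h0 := congrFun hEq (fun _ => 0)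
  simp at h0
  have h1 := congrFun hEq (fun j => if j = i then 1 else 0)
  simp [h0] at h1
  by_cases hii : i' = i
  · simp [hii, h0]
  · simp [hii] at h1

end AOM2

/-- For `a * b = (a+1) mod 2`, the ac-spectrum equals `2n` and the associative spectrum
equals `2` for `n ≥ 3`. -/
theorem addOneMod2_spectra (n : ℕ) (hn : 3 ≤ n) :
    acSpec addOneMod2 n = 2 * n ∧ assocSpec addOneMod2 n = 2 := by
  have i0lt : 0 < n := by omega
  -- destructure finRange n
  have hlen : (List.finRange n).length = n := List.length_finRange
  obtain ⟨a, b, c, rest, hF⟩ : ∃ a b c rest, List.finRange n = a :: b :: c :: rest := by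
    rcases hE : List.finRange n with _ | ⟨a, _ | ⟨b, _ | ⟨c, rest⟩⟩⟩ <;>
      rw [hE] at hlen <;> simp at hlen <;> try omega
    exact ⟨a, b, c, rest, rfl⟩
  constructor
  · -- ac spectrum
    have hset : {f : (Fin n → Fin 2) → Fin 2 |
        ∃ t : Term n, t.IsLinear ∧ f = fun h => t.eval addOneMod2 h} =
        Set.range (fun p : Fin n × Fin 2 => fun h : Fin n → Fin 2 => h p.1 + p.2) := by
      ext f
      constructor
      · rintro ⟨t, ht, rfl⟩
        exact ⟨(t.leftVar, (t.leftDepth : Fin 2)), by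
          funext h; exact (AOM2.eval_eq h t).symm⟩
      · rintro ⟨⟨i, k⟩, rfl⟩
        have hmem : i ∈ List.finRange n := List.mem_finRange i
        have hperm : (i :: (List.finRange n).erase i).Perm (List.finRange n) :=
          (List.perm_cons_erase hmem).symm
        have helen : ((List.finRange n).erase i).length = n - 1 := by
          rw [List.length_erase_of_mem hmem, hlen]
        obtain ⟨b', c', rest', hE⟩ : ∃ b' c' rest',
            (List.finRange n).erase i = b' :: c' :: rest' := by
          rcases hE : (List.finRange n).erase i with _ | ⟨b', _ | ⟨c', rest'⟩⟩ <;>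
            rw [hE] at helen <;> simp at helen <;> try omega
          exact ⟨b', c', rest', rfl⟩
        obtain ⟨t, htl, htv, htd⟩ := AOM2.exists_term i b' c' rest' k
        refine ⟨t, ?_, ?_⟩
        · unfold Term.IsLinear
          rw [htl, ← hE]
          exact hperm
        · funext h
          rw [AOM2.eval_eq h t, htv, htd]
    rw [acSpec, hset, ← Set.image_univ,
      Set.ncard_image_of_injective _ (AOM2.F_inj (by omega)), Set.ncard_univ]
    simp [Nat.card_eq_fintype_card, mul_comm]
  · -- associative spectrum
    have hset : {f : (Fin n → Fin 2) → Fin 2 |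
        ∃ t : Term n, t.IsBracketing ∧ f = fun h => t.eval addOneMod2 h} =
        Set.range (fun k : Fin 2 => fun h : Fin n → Fin 2 => h a + k) := by
      ext f
      constructor
      · rintro ⟨t, ht, rfl⟩
        obtain ⟨l, hl⟩ := AOM2.leaves_leftVar t
        have : t.leftVar = a := by
          have := ht.symm.trans hl
          rw [hF] at this
          exact (List.cons.injEq _ _ _ _ ▸ this).1.symm
        exact ⟨(t.leftDepth : Fin 2), by
          funext h; rw [AOM2.eval_eq h t, this]⟩
      · rintro ⟨k, rfl⟩
        obtain ⟨t, htl, htv, htd⟩ := AOM2.exists_term a b c rest k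
        refine ⟨t, ?_, ?_⟩
        · unfold Term.IsBracketing
          rw [htl, hF]
        · funext h
          rw [AOM2.eval_eq h t, htv, htd]
    have hinj : Function.Injective (fun k : Fin 2 => fun h : Fin n → Fin 2 => h a + k) := by
      intro k k' hkk
      have := congrFun hkk (fun _ => 0)
      simpa using this
    rw [assocSpec, hset, ← Set.image_univ, Set.ncard_image_of_injective _ hinj,
      Set.ncard_univ]
    simp [Nat.card_eq_fintype_card]
end

section
/- Let (G,*) be a groupoid satisfying the identities x*(y*z) = x*(z*y), (x*y)*z = (x*z)*y, w*(x*(y*z)) = w*((x*y)*z), (w*x)*(y*z) = (w*(x*y))*z, and w*(x*(y*z)) = ((w*x)*y)*z. Then for every n ≥ 3, every full linear term over x_1,…,x_n induces the same operation on G as either ⟨x_{i_1}, x_{i_2}, …, x_{i_n}⟩ with i_2 < ⋯ < i_n, or [x_{i_1}, x_{i_2}, ⟨x_{i_3}, …, x_{i_n}⟩] with i_2 < ⋯ < i_n. Consequently s^ac_n(*) ≤ 2n and s_n(*) ≤ 2. -/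
namespace SB
variable {G : Type*}

def fG (op : G → G → G) : G → List G → G
  | a, [] => a
  | a, x :: l => op a (fG op x l)

@[simp] theorem fG_nil (op : G → G → G) (a : G) : fG op a [] = a := rfl
@[simp] theorem fG_cons (op : G → G → G) (a x : G) (l : List G) :
    fG op a (x :: l) = op a (fG op x l) := rfl

variable {op : G → G → G}

theorem sw1 (i2 : ∀ x y z : G, op (op x y) z = op (op x z) y)
    (i5 : ∀ w x y z : G, op w (op x (op y z)) = op (op (op w x) y) z)
    (a x y w : G) : op a (op x (op y w)) = op a (op y (op x w)) := by
  rw [i5, i2 a x y, ← i5]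

theorem fG_perm (i1 : ∀ x y z : G, op x (op y z) = op x (op z y))
    (i2 : ∀ x y z : G, op (op x y) z = op (op x z) y)
    (i5 : ∀ w x y z : G, op w (op x (op y z)) = op (op (op w x) y) z) :
    ∀ {L L' : List G}, L.Perm L' → ∀ a, fG op a L = fG op a L' := by
  intro L L' h
  induction h with
  | nil => intro a; rfl
  | cons x h ih => intro a; simp only [fG_cons]; rw [ih]
  | swap x y L =>
      intro a
      match L with
      | [] => simp only [fG_cons, fG_nil]; exact i1 a y x
      | m :: L' => simp only [fG_cons]; exact sw1 i2 i5 a y x (fG op m L')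
  | trans h1 h2 ih1 ih2 => intro a; rw [ih1, ih2]

theorem fG_congr {X X' : G} (hx : ∀ c, op c X = op c X') :
    ∀ (L : List G) (w : G), fG op w (L ++ [X]) = fG op w (L ++ [X']) := by
  intro L
  induction L with
  | nil => intro w; simpa using hx w
  | cons l L ih => intro w; simp only [List.cons_append, fG_cons]; rw [ih]

theorem fG_split : ∀ (P : List G) (w q : G) (Q : List G),
    fG op w (P ++ q :: Q) = fG op w (P ++ [fG op q Q]) := by
  intro P
  induction P with
  | nil => intro w q Q; simp
  | cons p P ih => intro w q Q; simp only [List.cons_append, fG_cons]; rw [ih]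

theorem fG_mulflat (i3 : ∀ w x y z : G, op w (op x (op y z)) = op w (op (op x y) z)) :
    ∀ (P L : List G) (w p Z : G),
    fG op w (L ++ [op (fG op p P) Z]) = fG op w (L ++ [fG op p (P ++ [Z])]) := by
  intro P
  induction P with
  | nil => intro L w p Z; simp
  | cons x P ih =>
      intro L w p Z
      apply fG_congr
      intro c
      calc op c (op (fG op p (x :: P)) Z)
          = op c (op p (op (fG op x P) Z)) := by
            simp only [fG_cons]; exact (i3 c p (fG op x P) Z).symm
        _ = fG op c ([p] ++ [op (fG op x P) Z]) := by simp
        _ = fG op c ([p] ++ [fG op x (P ++ [Z])]) := ih [p] c x Z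
        _ = op c (op p (fG op x (P ++ [Z]))) := by simp

theorem fG_flat (i3 : ∀ w x y z : G, op w (op x (op y z)) = op w (op (op x y) z))
    (w p : G) (P : List G) (q : G) (Q : List G) :
    op w (op (fG op p P) (fG op q Q)) = op w (fG op p (P ++ q :: Q)) := by
  calc op w (op (fG op p P) (fG op q Q))
      = fG op w ([] ++ [op (fG op p P) (fG op q Q)]) := by simp
    _ = fG op w ([] ++ [fG op p (P ++ [fG op q Q])]) := fG_mulflat i3 P [] w p _
    _ = op w (fG op p (P ++ [fG op q Q])) := by simp
    _ = op w (fG op p (P ++ q :: Q)) := by rw [← fG_split]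

def hG (op : G → G → G) : G → List G → G
  | a, [] => a
  | a, y :: M => fG op (op a y) M

theorem hG_perm (i1 : ∀ x y z : G, op x (op y z) = op x (op z y))
    (i2 : ∀ x y z : G, op (op x y) z = op (op x z) y)
    (i4 : ∀ w x y z : G, op (op w x) (op y z) = op (op w (op x y)) z)
    (i5 : ∀ w x y z : G, op w (op x (op y z)) = op (op (op w x) y) z) :
    ∀ {L L' : List G}, L.Perm L' → ∀ a, hG op a L = hG op a L' := by
  intro L L' h
  induction h with
  | nil => intro a; rfl
  | cons x h ih => intro a; exact fG_perm i1 i2 i5 h _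
  | swap x y L =>
      intro a
      match L with
      | [] => exact i2 a y x
      | c :: L' =>
          show op (op a y) (op x (fG op c L')) = op (op a x) (op y (fG op c L'))
          rw [i4, i1 a y x, ← i4]
  | trans h1 h2 ih1 ih2 => intro a; rw [ih1, ih2]

section
variable (i1 : ∀ x y z : G, op x (op y z) = op x (op z y))
    (i2 : ∀ x y z : G, op (op x y) z = op (op x z) y)
    (i3 : ∀ w x y z : G, op w (op x (op y z)) = op w (op (op x y) z))
    (i4 : ∀ w x y z : G, op (op w x) (op y z) = op (op w (op x y)) z)
    (i5 : ∀ w x y z : G, op w (op x (op y z)) = op (op (op w x) y) z)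

include i3 in
theorem semA2 (a b c d : G) (D : List G) :
    op a (op (op b c) (fG op d D)) = fG op a (b :: c :: d :: D) := by
  rw [← i3]; simp

include i3 i4 in
theorem semC2 (a b m x : G) (M : List G) (T : List G) :
    op (op a (op b (fG op m M))) (fG op x T) = op (op a b) (fG op m (M ++ x :: T)) := by
  rw [← i4]
  exact fG_flat i3 (op a b) m M x T

include i3 i4 in
theorem semC3 (a b c d x : G) (D T : List G) :
    op (op a (op (op b c) (fG op d D))) (fG op x T)
      = op (op a b) (fG op c ((d :: D) ++ x :: T)) := by
  calc op (op a (op (op b c) (fG op d D))) (fG op x T)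
      = op (op a (op b c)) (op (fG op d D) (fG op x T)) := by rw [← i4]
    _ = op (op a b) (op c (op (fG op d D) (fG op x T))) := by rw [← i4]
    _ = op (op a b) (op (fG op c (d :: D)) (fG op x T)) := by rw [i3]; simp
    _ = op (op a b) (fG op c ((d :: D) ++ x :: T)) := fG_flat i3 _ _ _ _ _

include i5 in
theorem semD1 (a b c m : G) (M : List G) :
    op (op (op a b) c) (fG op m M) = fG op a (b :: c :: m :: M) := by
  rw [← i5]; simp

include i3 i4 i5 in
theorem semLD (a b c k m : G) (K M : List G) :
    op (op (op a b) (op c (fG op k K))) (fG op m M)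
      = fG op a (b :: c :: ((k :: K) ++ m :: M)) := by
  calc op (op (op a b) (op c (fG op k K))) (fG op m M)
      = op (op (op a (op b c)) (fG op k K)) (fG op m M) := by rw [i4]
    _ = op a (op (op b c) (op (fG op k K) (fG op m M))) := by rw [← i5]
    _ = op a (op b (op c (op (fG op k K) (fG op m M)))) := by rw [← i3]
    _ = op a (op b (op (fG op c (k :: K)) (fG op m M))) := by
          rw [i3 b c (fG op k K) (fG op m M)]; simp
    _ = op a (op b (fG op c ((k :: K) ++ m :: M))) := by
          rw [fG_flat i3 b c (k :: K) m M]
    _ = fG op a (b :: c :: ((k :: K) ++ m :: M)) := by simp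

include i3 i4 i5 in
theorem semD3 (a b c d k m : G) (K M : List G) :
    op (op (op a b) (op (op c d) (fG op k K))) (fG op m M)
      = fG op a (b :: c :: ((d :: k :: K) ++ m :: M)) := by
  rw [← i3 (op a b) c d (fG op k K)]
  have := semLD i3 i4 i5 a b c d m (k :: K) M
  simpa using this

end
end SB
namespace SB
open Term

variable {G : Type*} {n : ℕ}

theorem eval_rmBr (op : G → G → G) (h : Fin n → G) :
    ∀ (i : Fin n) (l : List (Fin n)), (rmBr i l).eval op h = fG op (h i) (l.map h)
  | i, [] => rfl
  | i, j :: l => by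
      show op (h i) ((rmBr j l).eval op h) = _
      rw [eval_rmBr op h j l]; rfl

theorem leaves_eq_leftVar_cons : ∀ t : Term n, ∃ r, t.leaves = t.leftVar :: r
  | .var i => ⟨[], rfl⟩
  | .mul s u => by
      obtain ⟨r, hr⟩ := leaves_eq_leftVar_cons s
      exact ⟨r ++ u.leaves, by simp [Term.leaves, Term.leftVar, hr]⟩

variable {op : G → G → G}

theorem main
    (i1 : ∀ x y z : G, op x (op y z) = op x (op z y))
    (i2 : ∀ x y z : G, op (op x y) z = op (op x z) y)
    (i3 : ∀ w x y z : G, op w (op x (op y z)) = op w (op (op x y) z))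
    (i4 : ∀ w x y z : G, op (op w x) (op y z) = op (op w (op x y)) z)
    (i5 : ∀ w x y z : G, op w (op x (op y z)) = op (op (op w x) y) z)
    (t : Term n) :
    (∃ (a : Fin n) (l : List (Fin n)), t.leaves.Perm (a :: l) ∧ t.leftVar = a ∧
      ∀ h : Fin n → G, t.eval op h = fG op (h a) (l.map h)) ∨
    (∃ (a b c : Fin n) (cs : List (Fin n)), t.leaves.Perm (a :: b :: c :: cs) ∧ t.leftVar = a ∧
      ∀ h : Fin n → G, t.eval op h = op (op (h a) (h b)) (fG op (h c) (cs.map h))) := by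
  induction t with
  | var i => exact Or.inl ⟨i, [], by simp [Term.leaves], rfl, fun h => rfl⟩
  | mul s u ihs ihu =>
    have hlv : (Term.mul s u).leftVar = s.leftVar := rfl
    have hle : (Term.mul s u).leaves = s.leaves ++ u.leaves := rfl
    have heval : ∀ h : Fin n → G,
        (Term.mul s u).eval op h = op (s.eval op h) (u.eval op h) := fun _ => rfl
    rcases ihs with ⟨a, l, hsp, hsv, hse⟩ | ⟨a, b, m, M, hsp, hsv, hse⟩
    · -- s is right-normed : fG a l
      obtain _ | ⟨x, _ | ⟨y, L⟩⟩ := l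
      · -- Case A : s acts as a single variable
        rcases ihu with ⟨c, K, hup, huv, hue⟩ | ⟨c, d, k, K, hup, huv, hue⟩
        · left
          refine ⟨a, c :: K, ?_, hlv.trans hsv, fun h => ?_⟩
          · rw [hle]
            refine (hsp.append hup).trans ?_
            simp
          · rw [heval h, hse h, hue h]; simp
        · left
          refine ⟨a, c :: d :: k :: K, ?_, hlv.trans hsv, fun h => ?_⟩
          · rw [hle]
            refine (hsp.append hup).trans ?_
            simp
          · rw [heval h, hse h, hue h]
            simp only [List.map_nil, fG_nil, List.map_cons]
            rw [semA2 i3]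
        
      · -- Case B : s = a * x
        rcases ihu with ⟨c, K, hup, huv, hue⟩ | ⟨c, d, k, K, hup, huv, hue⟩
        · right
          refine ⟨a, x, c, K, ?_, hlv.trans hsv, fun h => ?_⟩
          · rw [hle]
            refine (hsp.append hup).trans ?_
            refine List.perm_iff_count.mpr fun v => ?_
            simp [List.count_append, List.count_cons]
            try ring
          · rw [heval h, hse h, hue h]; simp
        · right
          refine ⟨a, x, c, d :: k :: K, ?_, hlv.trans hsv, fun h => ?_⟩
          · rw [hle]
            refine (hsp.append hup).trans ?_
            refine List.perm_iff_count.mpr fun v => ?_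
            simp [List.count_append, List.count_cons]
            try ring
          · rw [heval h, hse h, hue h]
            simp only [List.map_cons, List.map_nil, fG_cons, fG_nil]
            rw [semA2 i3]
            simp
      · -- Case C : s = fG a (x :: y :: L)
        rcases ihu with ⟨c, K, hup, huv, hue⟩ | ⟨c, d, k, K, hup, huv, hue⟩
        · obtain _ | ⟨k, K⟩ := K
          · -- C1 : u a single variable
            right
            refine ⟨a, c, x, y :: L, ?_, hlv.trans hsv, fun h => ?_⟩
            · rw [hle]
              refine (hsp.append hup).trans ?_
              refine List.perm_iff_count.mpr fun v => ?_
              simp [List.count_append, List.count_cons]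
              try ring
            · rw [heval h, hse h, hue h]
              simp only [List.map_cons, List.map_nil, fG_cons, fG_nil]
              rw [i2]
          · -- C2
            right
            refine ⟨a, c, k, K ++ x :: y :: L, ?_, hlv.trans hsv, fun h => ?_⟩
            · rw [hle]
              refine (hsp.append hup).trans ?_
              refine List.perm_iff_count.mpr fun v => ?_
              simp [List.count_append, List.count_cons]
              try ring
            · rw [heval h, hse h, hue h]
              simp only [List.map_cons, List.map_append, fG_cons]
              rw [i2, ← fG_cons op (h x) (h y) (List.map h L), semC2 i3 i4]
          
        · -- C3
          right
          refine ⟨a, c, d, (k :: K) ++ x :: y :: L, ?_, hlv.trans hsv, fun h => ?_⟩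
          · rw [hle]
            refine (hsp.append hup).trans ?_
            refine List.perm_iff_count.mpr fun v => ?_
            simp [List.count_append, List.count_cons]
            try ring
          · rw [heval h, hse h, hue h]
            simp only [List.map_cons, List.map_append, fG_cons]
            rw [i2, ← fG_cons op (h x) (h y) (List.map h L), semC3 i3 i4]
    · -- s is in second normal form : (a*b) * fG m M
      rcases ihu with ⟨c, K, hup, huv, hue⟩ | ⟨c, d, k, K, hup, huv, hue⟩
      · obtain _ | ⟨k, K⟩ := K
        · -- D1
          left
          refine ⟨a, b :: c :: m :: M, ?_, hlv.trans hsv, fun h => ?_⟩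
          · rw [hle]
            refine (hsp.append hup).trans ?_
            refine List.perm_iff_count.mpr fun v => ?_
            simp [List.count_append, List.count_cons]
            try ring
          · rw [heval h, hse h, hue h]
            simp only [List.map_cons, List.map_nil, fG_cons, fG_nil]
            rw [i2, semD1 i5]
            simp
        · -- D2
          left
          refine ⟨a, b :: c :: ((k :: K) ++ m :: M), ?_, hlv.trans hsv, fun h => ?_⟩
          · rw [hle]
            refine (hsp.append hup).trans ?_
            refine List.perm_iff_count.mpr fun v => ?_
            simp [List.count_append, List.count_cons]
            try ring
          · rw [heval h, hse h, hue h]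
            simp only [List.map_cons, List.map_append, fG_cons]
            rw [i2, semLD i3 i4 i5]
            simp
      · -- D3
        left
        refine ⟨a, b :: c :: ((d :: k :: K) ++ m :: M), ?_, hlv.trans hsv, fun h => ?_⟩
        · rw [hle]
          refine (hsp.append hup).trans ?_
          refine List.perm_iff_count.mpr fun v => ?_
          simp [List.count_append, List.count_cons]
          try ring
        · rw [heval h, hse h, hue h]
          simp only [List.map_cons, List.map_append, fG_cons]
          rw [i2, semD3 i3 i4 i5]
          simp

end SB
namespace SB

variable {G : Type*} {n : ℕ} {op : G → G → G}

theorem norm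
    (i1 : ∀ x y z : G, op x (op y z) = op x (op z y))
    (i2 : ∀ x y z : G, op (op x y) z = op (op x z) y)
    (i3 : ∀ w x y z : G, op w (op x (op y z)) = op w (op (op x y) z))
    (i4 : ∀ w x y z : G, op (op w x) (op y z) = op (op w (op x y)) z)
    (i5 : ∀ w x y z : G, op w (op x (op y z)) = op (op (op w x) y) z)
    (t : Term n) (ht : t.IsLinear) :
    (∃ (a : Fin n) (l : List (Fin n)), l.Pairwise (· < ·) ∧
        (a :: l).Perm (List.finRange n) ∧ t.leftVar = a ∧
        ∀ h : Fin n → G, t.eval op h = (rmBr a l).eval op h) ∨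
    (∃ (a b c : Fin n) (cs : List (Fin n)), (b :: c :: cs).Pairwise (· < ·) ∧
        (a :: b :: c :: cs).Perm (List.finRange n) ∧ t.leftVar = a ∧
        ∀ h : Fin n → G, t.eval op h =
          (Term.mul (Term.mul (Term.var a) (Term.var b)) (rmBr c cs)).eval op h) := by
  rcases main i1 i2 i3 i4 i5 t with ⟨a, l, hp, hv, he⟩ | ⟨a, b, c, cs, hp, hv, he⟩
  · left
    have hfin : (a :: l).Perm (List.finRange n) := hp.symm.trans ht
    have hnd : (a :: l).Nodup := hfin.symm.nodup (List.nodup_finRange n)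
    have hndl : l.Nodup := (List.nodup_cons.mp hnd).2
    have hpl : (l.insertionSort (· ≤ ·)).Perm l := List.perm_insertionSort _ l
    refine ⟨a, l.insertionSort (· ≤ ·), ?_, (hpl.cons a).trans hfin, hv, fun h => ?_⟩
    · exact ((List.pairwise_insertionSort _ l).and (hpl.symm.nodup hndl)).imp fun h => lt_of_le_of_ne h.1 h.2
    · rw [he h, eval_rmBr]
      exact fG_perm i1 i2 i5 ((hpl.symm).map h) (h a)
  · right
    have hfin : (a :: b :: c :: cs).Perm (List.finRange n) := hp.symm.trans ht
    have hnd : (b :: c :: cs).Nodup :=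
      (List.nodup_cons.mp (hfin.symm.nodup (List.nodup_finRange n))).2
    have hpl := List.perm_insertionSort (· ≤ ·) (b :: c :: cs)
    have hsorted := List.pairwise_insertionSort (· ≤ ·) (b :: c :: cs)
    obtain ⟨b', c', cs', hL⟩ :
        ∃ b' c' cs', (b :: c :: cs).insertionSort (· ≤ ·) = b' :: c' :: cs' := by
      have hlen : 2 ≤ ((b :: c :: cs).insertionSort (· ≤ ·)).length := by
        rw [hpl.length_eq]; simp
      rcases hLs : (b :: c :: cs).insertionSort (· ≤ ·) with _ | ⟨b', _ | ⟨c', cs'⟩⟩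
      · rw [hLs] at hlen; simp at hlen
      · rw [hLs] at hlen; simp at hlen
      · exact ⟨_, _, _, rfl⟩
    rw [hL] at hpl hsorted
    refine ⟨a, b', c', cs', (hsorted.and (hpl.symm.nodup hnd)).imp fun h => lt_of_le_of_ne h.1 h.2,
      (hpl.cons a).trans hfin, hv, fun h => ?_⟩
    have e1 : t.eval op h = hG op (h a) (List.map h (b :: c :: cs)) := he h
    have e2 : hG op (h a) (List.map h (b :: c :: cs))
        = hG op (h a) (List.map h (b' :: c' :: cs')) :=
      hG_perm i1 i2 i4 i5 ((hpl.symm).map h) (h a)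
    have e3 : (Term.mul (Term.mul (Term.var a) (Term.var b')) (rmBr c' cs')).eval op h
        = hG op (h a) (List.map h (b' :: c' :: cs')) := by
      show op (op (h a) (h b')) ((rmBr c' cs').eval op h) = _
      rw [eval_rmBr]; rfl
    rw [e1, e2, ← e3]

/-- The sorted complement of `a` in `Fin n`. -/
def scompl (n : ℕ) (a : Fin n) : List (Fin n) :=
  ((List.finRange n).erase a).insertionSort (· ≤ ·)

theorem eq_scompl {a : Fin n} {l : List (Fin n)} (hs : l.Pairwise (· < ·))
    (hp : (a :: l).Perm (List.finRange n)) : l = scompl n a := by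
  haveI : IsAntisymm (Fin n) (· < ·) := ⟨fun _ _ h h' => absurd h' (lt_asymm h)⟩
  have h1 : l.Perm ((List.finRange n).erase a) := (List.cons_perm_iff_perm_erase.mp hp).2
  have h2 : (scompl n a).Perm ((List.finRange n).erase a) := List.perm_insertionSort _ _
  have hnd : ((List.finRange n).erase a).Nodup := (List.nodup_finRange n).erase a
  exact (h1.trans h2.symm).eq_of_pairwise' hs
    (((List.pairwise_insertionSort _ _).and (h2.symm.nodup hnd)).imp fun h => lt_of_le_of_ne h.1 h.2)

/-- Normal-form term for a head variable `a`, a list `l`, and a shape flag. -/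
def nfT (a : Fin n) (l : List (Fin n)) : Bool → Term n
  | false => rmBr a l
  | true =>
    match l with
    | b :: c :: cs => Term.mul (Term.mul (Term.var a) (Term.var b)) (rmBr c cs)
    | l => rmBr a l

end SB
/-- For groupoids satisfying `x(yz) ≈ x(zy)`, `(xy)z ≈ (xz)y`, `w(x(yz)) ≈ w((xy)z)`,
`(wx)(yz) ≈ (w(xy))z` and `w(x(yz)) ≈ ((wx)y)z`, every full linear term is equivalent to
`⟨x_{i_1},…,x_{i_n}⟩` or `[x_{i_1}, x_{i_2}, ⟨x_{i_3},…,x_{i_n}⟩]` with `i_2 < ⋯ < i_n`;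
hence `s^ac_n ≤ 2n` and `s_n ≤ 2` for `n ≥ 3`. -/
theorem spec_bounds_twoN {G : Type*} (op : G → G → G)
    (i1 : ∀ x y z : G, op x (op y z) = op x (op z y))
    (i2 : ∀ x y z : G, op (op x y) z = op (op x z) y)
    (i3 : ∀ w x y z : G, op w (op x (op y z)) = op w (op (op x y) z))
    (i4 : ∀ w x y z : G, op (op w x) (op y z) = op (op w (op x y)) z)
    (i5 : ∀ w x y z : G, op w (op x (op y z)) = op (op (op w x) y) z)
    (n : ℕ) (hn : 3 ≤ n) :
    (∀ t : Term n, t.IsLinear →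
      (∃ (a : Fin n) (l : List (Fin n)), l.Pairwise (· < ·) ∧
        (a :: l).Perm (List.finRange n) ∧
        ∀ h : Fin n → G, t.eval op h = (rmBr a l).eval op h) ∨
      (∃ (a b c : Fin n) (cs : List (Fin n)), (b :: c :: cs).Pairwise (· < ·) ∧
        (a :: b :: c :: cs).Perm (List.finRange n) ∧
        ∀ h : Fin n → G, t.eval op h =
          (Term.mul (Term.mul (Term.var a) (Term.var b)) (rmBr c cs)).eval op h)) ∧
    acSpec op n ≤ 2 * n ∧ assocSpec op n ≤ 2 := by
  classical
  set F : Fin n × Bool → ((Fin n → G) → G) :=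
    fun p => fun h => (SB.nfT p.1 (SB.scompl n p.1) p.2).eval op h with hF
  have key : ∀ (t : Term n), t.IsLinear → ∀ f : (Fin n → G) → G,
      (f = fun h => t.eval op h) → f = F (t.leftVar, false) ∨ f = F (t.leftVar, true) := by
    intro t ht f hf
    rcases SB.norm i1 i2 i3 i4 i5 t ht with ⟨a, l, hs, hp, hv, he⟩ | ⟨a, b, c, cs, hs, hp, hv, he⟩
    · left
      have hl : l = SB.scompl n a := SB.eq_scompl hs hp
      funext h
      rw [hf, hF]
      show t.eval op h = (SB.nfT t.leftVar (SB.scompl n t.leftVar) false).eval op h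
      rw [hv, ← hl]
      exact he h
    · right
      have hl : b :: c :: cs = SB.scompl n a := SB.eq_scompl hs hp
      funext h
      rw [hf, hF]
      show t.eval op h = (SB.nfT t.leftVar (SB.scompl n t.leftVar) true).eval op h
      rw [hv, ← hl]
      exact he h
  refine ⟨?_, ?_, ?_⟩
  · intro t ht
    rcases SB.norm i1 i2 i3 i4 i5 t ht with ⟨a, l, hs, hp, _, he⟩ | ⟨a, b, c, cs, hs, hp, _, he⟩
    · exact Or.inl ⟨a, l, hs, hp, he⟩
    · exact Or.inr ⟨a, b, c, cs, hs, hp, he⟩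
  · -- acSpec bound
    have hsub : {f : (Fin n → G) → G | ∃ t : Term n, t.IsLinear ∧ f = fun h => t.eval op h}
        ⊆ Set.range F := by
      rintro f ⟨t, ht, hf⟩
      rcases key t ht f hf with h' | h'
      · exact ⟨(t.leftVar, false), h'.symm⟩
      · exact ⟨(t.leftVar, true), h'.symm⟩
    calc acSpec op n
        ≤ (Set.range F).ncard := Set.ncard_le_ncard hsub (Set.finite_range F)
      _ = (F '' Set.univ).ncard := by rw [Set.image_univ]
      _ ≤ (Set.univ : Set (Fin n × Bool)).ncard := Set.ncard_image_le Set.finite_univ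
      _ = Nat.card (Fin n × Bool) := Set.ncard_univ _
      _ = 2 * n := by
          rw [Nat.card_eq_fintype_card, Fintype.card_prod, Fintype.card_fin, Fintype.card_bool]
          ring
  · -- assocSpec bound
    have h0 : 0 < n := by omega
    have hsub : {f : (Fin n → G) → G | ∃ t : Term n, t.IsBracketing ∧ f = fun h => t.eval op h}
        ⊆ {F (⟨0, h0⟩, false), F (⟨0, h0⟩, true)} := by
      rintro f ⟨t, ht, hf⟩
      have htl : t.IsLinear := by rw [Term.IsLinear, ht]
      have hz : t.leftVar = ⟨0, h0⟩ := by
        obtain ⟨r, hr⟩ := SB.leaves_eq_leftVar_cons t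
        have hfr : List.finRange n = t.leftVar :: r := by rw [← ht, hr]
        have h1 : (List.finRange n)[0]? = some t.leftVar := by rw [hfr]; simp
        have h2 : (List.finRange n)[0]? = some ((⟨0, h0⟩ : Fin n)) := by
          rw [List.getElem?_eq_getElem (by simpa using h0)]
          simp [List.getElem_finRange, Fin.cast]
        rw [h1] at h2
        exact Option.some_injective _ h2
      rcases key t htl f hf with h' | h'
      · exact Or.inl (by rw [h', hz])
      · exact Or.inr (by rw [h', hz]; exact rfl)
    calc assocSpec op n
        ≤ ({F (⟨0, h0⟩, false), F (⟨0, h0⟩, true)} : Set ((Fin n → G) → G)).ncard :=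
          Set.ncard_le_ncard hsub (Set.toFinite _)
      _ ≤ 2 := by
          refine (Set.ncard_insert_le _ _).trans ?_
          simp
end
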